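/- arXiv:1310.4845 — 3 statements merged into one kernel-verified Lean document; each statement's English description precedes it below -/
import Mathlib

section
/- Let f : ℝⁿ → ℝ be locally Lipschitz around a point x, and let (v,r) be a nonzero vector in the Whitney normal cone C(ℝⁿ⁺¹ \ epi(f), epi(f)) at the point (x, f(x)), where epi(f) = {(y,t) : f(y) ≤ t}. Then r ≤ f°(x,v), where f°(x,v) = limsup_{y→x, t↓0} (f(y+tv) - f(y))/t is the Clarke generalized directional derivative. (Here (v,r) ∈ C(A,B) at p means there exist sequences xₙ ∈ A, yₙ ∈ B, cₙ > 0 with xₙ → p, yₙ → p, and cₙ(xₙ - yₙ) → (v,r).) -/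
/-
Write the Whitney sequences as `X m ∉ epi f`, `Y m ∈ epi f` with scales `c m > 0`. Since
`X m - Y m → 0` while `c m • (X m - Y m) → (v, r) ≠ 0`, the scales tend to infinity, so the points
`((Y m).1, (c m)⁻¹)` tend to `(x, 0⁺)` along the filter defining `f°(x, v)`. As `(X m).2 < f (X m).1`
and `f (Y m).1 ≤ (Y m).2`, the Lipschitz bound gives
  `c m * ((X m).2 - (Y m).2) ≤ c m * (f ((Y m).1 + (c m)⁻¹ • v) - f (Y m).1) + K * ‖c m • ((X m).1 - (Y m).1) - v‖`,
whose left side tends to `r`, whose error term tends to `0`, and whose first term on the right is a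
difference quotient of `f°(x, v)`.
-/

open Filter Set

noncomputable def clarkeDeriv {E : Type*} [NormedAddCommGroup E] [NormedSpace ℝ E]
    (f : E → ℝ) (x v : E) : ℝ :=
  Filter.limsup (fun p : E × ℝ => (f (p.1 + p.2 • v) - f p.1) / p.2)
    ((nhds x) ×ˢ (nhdsWithin 0 (Set.Ioi 0)))

noncomputable def clarkeSubdiff {E : Type*} [NormedAddCommGroup E] [InnerProductSpace ℝ E]
    (f : E → ℝ) (x : E) : Set E :=
  {ξ | ∀ v, (inner ℝ ξ v : ℝ) ≤ clarkeDeriv f x v}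

def whitneyCone {E : Type*} [NormedAddCommGroup E] [NormedSpace ℝ E]
    (A B : Set E) (p : E) : Set E :=
  {w | ∃ (x y : ℕ → E) (c : ℕ → ℝ), (∀ n, x n ∈ A) ∧ (∀ n, y n ∈ B) ∧ (∀ n, 0 < c n) ∧
    Filter.Tendsto x Filter.atTop (nhds p) ∧ Filter.Tendsto y Filter.atTop (nhds p) ∧
    Filter.Tendsto (fun n => c n • (x n - y n)) Filter.atTop (nhds w)}

def epi {E : Type*} (f : E → ℝ) : Set (E × ℝ) := {p | f p.1 ≤ p.2}

open Topology

theorem tendsto_atTop_of_tendsto_smul_ne_zero {ι E : Type*} [NormedAddCommGroup E]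
    [NormedSpace ℝ E] {l : Filter ι} {c : ι → ℝ} {d : ι → E} {w : E} (hc : ∀ i, 0 < c i)
    (hd : Tendsto d l (𝓝 0)) (hcd : Tendsto (fun i => c i • d i) l (𝓝 w)) (hw : w ≠ 0) :
    Tendsto c l atTop := by
  have hw' : 0 < ‖w‖ := norm_pos_iff.2 hw
  have hnorm : Tendsto (fun i => c i * ‖d i‖) l (𝓝 ‖w‖) := by
    simpa [norm_smul, abs_of_pos (hc _)] using hcd.norm
  have hd_pos : ∀ᶠ i in l, 0 < ‖d i‖ := by
    filter_upwards [hnorm.eventually_const_lt hw'] with i hi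
    exact pos_of_mul_pos_right hi (hc i).le
  have hd_inv : Tendsto (fun i => ‖d i‖⁻¹) l atTop :=
    tendsto_inv_nhdsGT_zero.comp (tendsto_nhdsWithin_iff.2 ⟨tendsto_norm_zero.comp hd, hd_pos⟩)
  refine (hnorm.pos_mul_atTop hw' hd_inv).congr' ?_
  filter_upwards [hd_pos] with i hi
  field_simp

theorem le_limsup_of_tendsto_of_eventually_le {α β : Type*} {l : Filter α} {lb : Filter β}
    [lb.NeBot] {q : α → ℝ} {P : β → α} {u : β → ℝ} {r : ℝ} (hP : Tendsto P lb l)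
    (hu : Tendsto u lb (𝓝 r)) (huq : ∀ᶠ m in lb, u m ≤ q (P m))
    (hq : IsBoundedUnder (· ≤ ·) l q) : r ≤ limsup q l := by
  refine le_of_forall_lt_imp_le_of_dense fun y hy => le_limsup_of_frequently_le ?_ hq
  refine hP.frequently (Eventually.frequently ?_)
  filter_upwards [hu.eventually_const_lt hy, huq] with m hyu huq
  exact hyu.le.trans huq

theorem LipschitzOnWith.sub_le_mul_norm_sub {E : Type*} [SeminormedAddCommGroup E] {f : E → ℝ}
    {K : NNReal} {s : Set E} (hf : LipschitzOnWith K f s) {a b : E} (ha : a ∈ s) (hb : b ∈ s) :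
    f a - f b ≤ K * ‖a - b‖ := by
  simpa [dist_eq_norm] using (Real.sub_le_dist _ _).trans (hf.dist_le_mul a ha b hb)

section Lipschitz

variable {E : Type*} [NormedAddCommGroup E] [NormedSpace ℝ E] {f : E → ℝ} {K : NNReal} {s : Set E}

theorem LipschitzOnWith.eventually_diffQuot_le (hf : LipschitzOnWith K f s) {x : E}
    (hs : s ∈ 𝓝 x) (v : E) :
    ∀ᶠ p in 𝓝 x ×ˢ 𝓝[>] (0 : ℝ), (f (p.1 + p.2 • v) - f p.1) / p.2 ≤ K * ‖v‖ := by
  have hshift : Tendsto (fun p : E × ℝ => p.1 + p.2 • v) (𝓝 x ×ˢ 𝓝[>] 0) (𝓝 x) := by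
    have : Tendsto (fun p : E × ℝ => p.1 + p.2 • v) (𝓝 x ×ˢ 𝓝 0) (𝓝 (x + (0 : ℝ) • v)) :=
      tendsto_fst.add (tendsto_snd.smul_const v)
    simpa using this.mono_left (prod_mono le_rfl nhdsWithin_le_nhds)
  filter_upwards [tendsto_fst.eventually hs, hshift hs,
    tendsto_snd.eventually self_mem_nhdsWithin] with p hp hpv (ht : 0 < p.2)
  rw [div_le_iff₀ ht]
  calc f (p.1 + p.2 • v) - f p.1 ≤ K * ‖p.1 + p.2 • v - p.1‖ := hf.sub_le_mul_norm_sub hpv hp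
    _ = K * ‖v‖ * p.2 := by rw [add_sub_cancel_left, norm_smul, Real.norm_of_nonneg ht.le]; ring

theorem LipschitzOnWith.mul_sub_le_diffQuot_add (hf : LipschitzOnWith K f s) {X Y : E × ℝ}
    {v : E} {c : ℝ} (hX : X ∉ epi f) (hY : Y ∈ epi f) (hc : 0 < c) (hXs : X.1 ∈ s)
    (hYv : Y.1 + c⁻¹ • v ∈ s) :
    c * (X.2 - Y.2) ≤ (f (Y.1 + c⁻¹ • v) - f Y.1) / c⁻¹ + K * ‖c • (X.1 - Y.1) - v‖ := by
  have hX' : X.2 < f X.1 := not_le.1 hX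
  have hY' : f Y.1 ≤ Y.2 := hY
  have hscale : c * ‖X.1 - (Y.1 + c⁻¹ • v)‖ = ‖c • (X.1 - Y.1) - v‖ := by
    have : c • (X.1 - (Y.1 + c⁻¹ • v)) = c • (X.1 - Y.1) - v := by
      rw [smul_sub, smul_add, smul_inv_smul₀ hc.ne', smul_sub]; abel
    rw [← this, norm_smul, Real.norm_of_nonneg hc.le]
  have hlip := hf.sub_le_mul_norm_sub hXs hYv
  calc c * (X.2 - Y.2) ≤ c * (f X.1 - f Y.1) :=
      mul_le_mul_of_nonneg_left (by linarith) hc.le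
    _ = c * (f (Y.1 + c⁻¹ • v) - f Y.1) + c * (f X.1 - f (Y.1 + c⁻¹ • v)) := by ring
    _ ≤ c * (f (Y.1 + c⁻¹ • v) - f Y.1) + c * (K * ‖X.1 - (Y.1 + c⁻¹ • v)‖) := by gcongr
    _ = (f (Y.1 + c⁻¹ • v) - f Y.1) / c⁻¹ + K * ‖c • (X.1 - Y.1) - v‖ := by
      rw [div_inv_eq_mul, ← hscale]; ring

theorem LipschitzOnWith.le_clarkeDeriv_of_mem_whitneyCone (hf : LipschitzOnWith K f s) {x v : E}
    {r : ℝ} (hs : s ∈ 𝓝 x) (hvr : (v, r) ≠ 0)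
    (h : (v, r) ∈ whitneyCone (epi f)ᶜ (epi f) (x, f x)) : r ≤ clarkeDeriv f x v := by
  obtain ⟨X, Y, c, hX, hY, hc, hXlim, hYlim, hlim⟩ := h
  have hc_top : Tendsto c atTop atTop :=
    tendsto_atTop_of_tendsto_smul_ne_zero hc (by simpa using hXlim.sub hYlim) hlim hvr
  have hc_inv : Tendsto (fun m => (c m)⁻¹) atTop (𝓝[>] 0) :=
    tendsto_inv_atTop_nhdsGT_zero.comp hc_top
  have hYx : Tendsto (fun m => (Y m).1) atTop (𝓝 x) := hYlim.fst_nhds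
  have hYvx : Tendsto (fun m => (Y m).1 + (c m)⁻¹ • v) atTop (𝓝 x) := by
    simpa using hYx.add ((tendsto_inv_atTop_zero.comp hc_top).smul_const v)
  have herr : Tendsto (fun m => K * ‖c m • ((X m).1 - (Y m).1) - v‖) atTop (𝓝 0) := by
    simpa using (hlim.fst_nhds.sub_const v).norm.const_mul (K : ℝ)
  have hr : Tendsto (fun m => c m * ((X m).2 - (Y m).2) - K * ‖c m • ((X m).1 - (Y m).1) - v‖)
      atTop (𝓝 r) := by
    simpa using hlim.snd_nhds.sub herr
  refine le_limsup_of_tendsto_of_eventually_le (hYx.prodMk hc_inv) hr ?_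
    ⟨K * ‖v‖, eventually_map.2 (hf.eventually_diffQuot_le hs v)⟩
  filter_upwards [hXlim.fst_nhds hs, hYvx hs] with m hXs hYvs
  have := hf.mul_sub_le_diffQuot_add (hX m) (hY m) (hc m) hXs hYvs
  linarith

end Lipschitz

theorem stmt0 {n : ℕ} (f : EuclideanSpace ℝ (Fin n) → ℝ) (x : EuclideanSpace ℝ (Fin n))
    (K : NNReal) (ε : ℝ) (hε : 0 < ε) (hf : LipschitzOnWith K f (Metric.ball x ε))
    (v : EuclideanSpace ℝ (Fin n)) (r : ℝ) (hvr : (v, r) ≠ (0 : EuclideanSpace ℝ (Fin n) × ℝ))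
    (h : (v, r) ∈ whitneyCone (epi f)ᶜ (epi f) (x, f x)) :
    r ≤ clarkeDeriv f x v :=
  hf.le_clarkeDeriv_of_mem_whitneyCone (Metric.ball_mem_nhds x hε) hvr h
end

section
/- Let f : ℝⁿ → ℝ be convex (and hence locally Lipschitz). Then the Clarke subdifferential ∂_c f(x) coincides with the convex-analysis subdifferential {ξ : f(y) ≥ f(x) + ⟨ξ, y-x⟩ for all y}. -/
open Filter Set

open Topology

/-! Along a line, the difference quotient `t ↦ (f (y + t • v) - f y) / t` of a convex function is
monotone in `t`. Near `(x, 0⁺)` it is therefore bounded above by `f (y + v) - f y`, which tends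
to `f (x + v) - f x` by continuity; so `f°(x, v) ≤ f (x + v) - f x`, and a Clarke subgradient is
a convex subgradient. Conversely, the subgradient inequality bounds every quotient based at `x`
from below by `⟪ξ, v⟫`, and these quotients occur frequently along the filter defining `f°`. -/

section DiffQuot

variable {E : Type*} [AddCommGroup E] [Module ℝ E] {f : E → ℝ}

theorem ConvexOn.monotoneOn_diffQuot (hf : ConvexOn ℝ univ f) (y v : E) :
    MonotoneOn (fun t : ℝ => (f (y + t • v) - f y) / t) {0}ᶜ := by
  have hline : ConvexOn ℝ univ (fun t : ℝ => f (y + t • v)) := by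
    simpa [Function.comp_def, AffineMap.lineMap_apply, add_comm]
      using hf.comp_affineMap (AffineMap.lineMap y (y + v))
  have hslope :
      slope (fun t : ℝ => f (y + t • v)) 0 = fun t => (f (y + t • v) - f y) / t := by
    ext t
    simp [slope_def_field]
  simpa [hslope, compl_eq_univ_sdiff] using hline.slope_mono (mem_univ 0)

theorem ConvexOn.diffQuot_le_of_le_one (hf : ConvexOn ℝ univ f) (y v : E) {t : ℝ}
    (ht₀ : 0 < t) (ht₁ : t ≤ 1) : (f (y + t • v) - f y) / t ≤ f (y + v) - f y := by
  simpa using hf.monotoneOn_diffQuot y v ht₀.ne' one_ne_zero ht₁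

theorem ConvexOn.sub_le_diffQuot (hf : ConvexOn ℝ univ f) (y v : E) {t : ℝ} (ht : 0 < t) :
    f y - f (y - v) ≤ (f (y + t • v) - f y) / t := by
  simpa [div_neg, sub_eq_add_neg] using
    hf.monotoneOn_diffQuot y v (a := -1) (by norm_num) ht.ne' (by linarith)

end DiffQuot

theorem ContinuousAt.tendsto_add_sub_fst {E β : Type*} [TopologicalSpace E] [Add E]
    [ContinuousAdd E] {f : E → ℝ} {x v : E} (l : Filter β) (hfx : ContinuousAt f x)
    (hfxv : ContinuousAt f (x + v)) :
    Tendsto (fun p : E × β => f (p.1 + v) - f p.1) (𝓝 x ×ˢ l) (𝓝 (f (x + v) - f x)) :=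
  ((hfxv.tendsto.comp ((continuous_add_const v).tendsto x)).sub hfx.tendsto).comp tendsto_fst

section ClarkeDeriv

variable {E : Type*} [NormedAddCommGroup E] [NormedSpace ℝ E] {f : E → ℝ} {x v : E}

noncomputable def clarkeQuotient (f : E → ℝ) (v : E) (p : E × ℝ) : ℝ :=
  (f (p.1 + p.2 • v) - f p.1) / p.2

theorem clarkeDeriv_eq_limsup :
    clarkeDeriv f x v = limsup (clarkeQuotient f v) (𝓝 x ×ˢ 𝓝[>] 0) :=
  rfl

theorem frequently_le_clarkeQuotient {c : ℝ} (h : ∀ t > 0, c ≤ (f (x + t • v) - f x) / t) :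
    ∃ᶠ p in 𝓝 x ×ˢ 𝓝[>] 0, c ≤ clarkeQuotient f v p := by
  have hslice : Tendsto (fun t : ℝ => (x, t)) (𝓝[>] 0) (𝓝 x ×ˢ 𝓝[>] 0) :=
    tendsto_const_nhds.prodMk tendsto_id
  refine hslice.frequently (Eventually.frequently ?_)
  filter_upwards [self_mem_nhdsWithin] with t ht using h t ht

theorem le_clarkeDeriv {c : ℝ}
    (hbdd : (𝓝 x ×ˢ 𝓝[>] 0).IsBoundedUnder (· ≤ ·) (clarkeQuotient f v))
    (h : ∀ t > 0, c ≤ (f (x + t • v) - f x) / t) : c ≤ clarkeDeriv f x v := by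
  rw [clarkeDeriv_eq_limsup]
  exact le_limsup_of_frequently_le (frequently_le_clarkeQuotient h) hbdd

theorem ConvexOn.eventually_clarkeQuotient_le (hf : ConvexOn ℝ univ f) :
    ∀ᶠ p in 𝓝 x ×ˢ 𝓝[>] 0, clarkeQuotient f v p ≤ f (p.1 + v) - f p.1 := by
  have ht : ∀ᶠ p : E × ℝ in 𝓝 x ×ˢ 𝓝[>] 0, p.2 ∈ Ioc (0 : ℝ) 1 :=
    tendsto_snd.eventually (Ioc_mem_nhdsGT zero_lt_one)
  filter_upwards [ht] with p hp using hf.diffQuot_le_of_le_one p.1 v hp.1 hp.2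

theorem ConvexOn.isBoundedUnder_clarkeQuotient (hf : ConvexOn ℝ univ f) (hfx : ContinuousAt f x)
    (hfxv : ContinuousAt f (x + v)) :
    (𝓝 x ×ˢ 𝓝[>] 0).IsBoundedUnder (· ≤ ·) (clarkeQuotient f v) :=
  (hfx.tendsto_add_sub_fst _ hfxv).isBoundedUnder_le.mono_le hf.eventually_clarkeQuotient_le

theorem ConvexOn.clarkeDeriv_le_sub (hf : ConvexOn ℝ univ f) (hfx : ContinuousAt f x)
    (hfxv : ContinuousAt f (x + v)) : clarkeDeriv f x v ≤ f (x + v) - f x := by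
  -- Without this lower bound the real-valued `limsup` could be a junk value.
  have hcobdd : (𝓝 x ×ˢ 𝓝[>] 0).IsCoboundedUnder (· ≤ ·) (clarkeQuotient f v) :=
    IsCobounded.of_frequently_ge <|
      frequently_le_clarkeQuotient fun _ ht => hf.sub_le_diffQuot x v ht
  have hlim := hfx.tendsto_add_sub_fst (𝓝[>] (0 : ℝ)) hfxv
  calc clarkeDeriv f x v
      = limsup (clarkeQuotient f v) (𝓝 x ×ˢ 𝓝[>] 0) := clarkeDeriv_eq_limsup
    _ ≤ limsup (fun p : E × ℝ => f (p.1 + v) - f p.1) (𝓝 x ×ˢ 𝓝[>] 0) :=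
        limsup_le_limsup hf.eventually_clarkeQuotient_le hcobdd hlim.isBoundedUnder_le
    _ = f (x + v) - f x := hlim.limsup_eq

end ClarkeDeriv

theorem ConvexOn.clarkeSubdiff_eq {E : Type*} [NormedAddCommGroup E] [InnerProductSpace ℝ E]
    {f : E → ℝ} (hf : ConvexOn ℝ univ f) (hcont : Continuous f) (x : E) :
    clarkeSubdiff f x = {ξ | ∀ y, f x + (inner ℝ ξ (y - x) : ℝ) ≤ f y} := by
  ext ξ
  constructor
  · intro hξ y
    have := (hξ (y - x)).trans
      (hf.clarkeDeriv_le_sub hcont.continuousAt hcont.continuousAt)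
    rw [add_sub_cancel] at this
    linarith
  · intro hξ v
    refine le_clarkeDeriv (hf.isBoundedUnder_clarkeQuotient hcont.continuousAt hcont.continuousAt)
      fun t ht => ?_
    have h := hξ (x + t • v)
    rw [add_sub_cancel_left, real_inner_smul_right] at h
    rw [le_div_iff₀ ht]
    linarith

theorem stmt7 {n : ℕ} (f : EuclideanSpace ℝ (Fin n) → ℝ)
    (hf : ConvexOn ℝ Set.univ f) (x : EuclideanSpace ℝ (Fin n)) :
    clarkeSubdiff f x = {ξ | ∀ y, f x + (inner ℝ ξ (y - x) : ℝ) ≤ f y} :=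
  hf.clarkeSubdiff_eq (continuousOn_univ.1 (hf.continuousOn isOpen_univ)) x
end

section
/- Let f : ℝ² → ℝ be given by f(x,y) = |x| + |y| - √(x²+y²). At every point (x,y) with x ≠ 0, y ≠ 0, f is differentiable with gradient (sign(x) - x/√(x²+y²), sign(y) - y/√(x²+y²)), and the set of all limits of gradients df(xᵢ,yᵢ) over sequences (xᵢ,yᵢ) → (0,0) with xᵢ ≠ 0 ≠ yᵢ is contained in {(a,b) : b = ±1 ∓ √((2-|a|)|a|), |a| ≤ 1} ∪ {(a,b) : a = ±1 ∓ √((2-|b|)|b|), |b| ≤ 1}. -/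
open Filter Set

noncomputable def f10 : ℝ × ℝ → ℝ := fun p => |p.1| + |p.2| - Real.sqrt (p.1 ^ 2 + p.2 ^ 2)

noncomputable def grad10 : ℝ × ℝ → ℝ × ℝ := fun p =>
  (Real.sign p.1 - p.1 / Real.sqrt (p.1 ^ 2 + p.2 ^ 2),
   Real.sign p.2 - p.2 / Real.sqrt (p.1 ^ 2 + p.2 ^ 2))

/-!
At a point `(x, y)` off the axes, with `r = √(x² + y²)`, the two components of the gradient
have absolute values `1 - |x|/r` and `1 - |y|/r`. Since `(|x|/r)² + (|y|/r)² = 1`, every such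
gradient `(a, b)` lies on the closed set `(1 - |a|)² + (1 - |b|)² = 1`, `|a|, |b| ≤ 1` (four
quarter circles of radius one centred at `(±1, ±1)`), hence so does every limit of gradients;
solving the circle equation for `b` gives the claimed description.
-/

lemma Real.sign_eq_coe_sign (x : ℝ) : Real.sign x = (SignType.sign x : ℝ) := by
  rcases lt_trichotomy x 0 with h | rfl | h
  · simp [h, Real.sign_of_neg h]
  · simp [Real.sign_zero]
  · simp [h, Real.sign_of_pos h]

lemma hasFDerivAt_f10 {p : ℝ × ℝ} (hx : p.1 ≠ 0) (hy : p.2 ≠ 0) :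
    HasFDerivAt f10
      ((grad10 p).1 • ContinuousLinearMap.fst ℝ ℝ ℝ +
       (grad10 p).2 • ContinuousLinearMap.snd ℝ ℝ ℝ) p := by
  have hfst : HasFDerivAt (fun q : ℝ × ℝ => q.1) (ContinuousLinearMap.fst ℝ ℝ ℝ) p :=
    hasFDerivAt_fst
  have hsnd : HasFDerivAt (fun q : ℝ × ℝ => q.2) (ContinuousLinearMap.snd ℝ ℝ ℝ) p :=
    hasFDerivAt_snd
  have hsq : HasFDerivAt (fun q : ℝ × ℝ => q.1 ^ 2 + q.2 ^ 2)
      ((2 * p.1) • ContinuousLinearMap.fst ℝ ℝ ℝ + (2 * p.2) • ContinuousLinearMap.snd ℝ ℝ ℝ)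
      p := by
    refine ((hfst.pow 2).add (hsnd.pow 2)).congr_fderiv ?_
    ext <;> simp
  have hf := ((hfst.abs hx).add (hsnd.abs hy)).sub (hsq.sqrt (by positivity))
  have hr : Real.sqrt (p.1 ^ 2 + p.2 ^ 2) ≠ 0 := by positivity
  refine hf.congr_fderiv ?_
  ext <;> simp [grad10, Real.sign_eq_coe_sign] <;> field_simp

lemma abs_sign_sub_div {x r : ℝ} (hx : x ≠ 0) (hxr : |x| ≤ r) :
    |Real.sign x - x / r| = 1 - |x| / r := by
  have hr : 0 < r := (abs_pos.2 hx).trans_le hxr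
  have hle : |x| / r ≤ 1 := div_le_one_of_le₀ hxr hr.le
  rcases hx.lt_or_gt with h | h
  · rw [abs_of_neg h] at hle ⊢
    rw [Real.sign_of_neg h, abs_of_nonpos (by rw [neg_div] at hle; linarith)]
    ring
  · rw [abs_of_pos h] at hle ⊢
    rw [Real.sign_of_pos h, abs_of_nonneg (by linarith)]

def cornerArcs : Set (ℝ × ℝ) :=
  {q | (1 - |q.1|) ^ 2 + (1 - |q.2|) ^ 2 = 1 ∧ |q.1| ≤ 1 ∧ |q.2| ≤ 1}

lemma isClosed_cornerArcs : IsClosed cornerArcs :=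
  (isClosed_eq (by fun_prop) continuous_const).inter
    ((isClosed_le (continuous_abs.comp continuous_fst) continuous_const).inter
      (isClosed_le (continuous_abs.comp continuous_snd) continuous_const))

lemma grad10_mem_cornerArcs {p : ℝ × ℝ} (hx : p.1 ≠ 0) (hy : p.2 ≠ 0) :
    grad10 p ∈ cornerArcs := by
  set r := Real.sqrt (p.1 ^ 2 + p.2 ^ 2)
  have hr : 0 < r := Real.sqrt_pos.2 (by positivity)
  have hxr : |p.1| ≤ r := Real.abs_le_sqrt (by nlinarith)
  have hyr : |p.2| ≤ r := Real.abs_le_sqrt (by nlinarith)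
  have hpyth : (|p.1| / r) ^ 2 + (|p.2| / r) ^ 2 = 1 := by
    rw [div_pow, div_pow, sq_abs, sq_abs, Real.sq_sqrt (by positivity), ← add_div,
      div_self (by positivity)]
  simp only [cornerArcs, grad10, mem_ofPred_eq]
  rw [abs_sign_sub_div hx hxr, abs_sign_sub_div hy hyr]
  refine ⟨by simpa using hpyth, ?_, ?_⟩ <;> linarith [div_nonneg (abs_nonneg p.1) hr.le,
    div_nonneg (abs_nonneg p.2) hr.le]

lemma cornerArcs_subset :
    cornerArcs ⊆ {q : ℝ × ℝ | (q.2 = 1 - Real.sqrt ((2 - |q.1|) * |q.1|) ∨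
                    q.2 = -1 + Real.sqrt ((2 - |q.1|) * |q.1|)) ∧ |q.1| ≤ 1} := by
  rintro ⟨a, b⟩ ⟨hcirc, ha, hb⟩
  have hroot : Real.sqrt ((2 - |a|) * |a|) = 1 - |b| := by
    rw [← Real.sqrt_sq (by linarith : 0 ≤ 1 - |b|)]
    congr 1
    linarith
  refine ⟨?_, ha⟩
  rw [hroot]
  rcases abs_cases b with ⟨hb', -⟩ | ⟨hb', -⟩
  · left; linarith
  · right; linarith

theorem stmt10 :
    (∀ p : ℝ × ℝ, p.1 ≠ 0 → p.2 ≠ 0 →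
      HasFDerivAt f10
        ((grad10 p).1 • ContinuousLinearMap.fst ℝ ℝ ℝ +
         (grad10 p).2 • ContinuousLinearMap.snd ℝ ℝ ℝ) p) ∧
    {q : ℝ × ℝ | ∃ z : ℕ → ℝ × ℝ, (∀ n, (z n).1 ≠ 0 ∧ (z n).2 ≠ 0) ∧
        Filter.Tendsto z Filter.atTop (nhds (0, 0)) ∧
        Filter.Tendsto (fun n => grad10 (z n)) Filter.atTop (nhds q)} ⊆
      {q : ℝ × ℝ | (q.2 = 1 - Real.sqrt ((2 - |q.1|) * |q.1|) ∨
                    q.2 = -1 + Real.sqrt ((2 - |q.1|) * |q.1|)) ∧ |q.1| ≤ 1} ∪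
      {q : ℝ × ℝ | (q.1 = 1 - Real.sqrt ((2 - |q.2|) * |q.2|) ∨
                    q.1 = -1 + Real.sqrt ((2 - |q.2|) * |q.2|)) ∧ |q.2| ≤ 1} := by
  refine ⟨fun p hx hy => hasFDerivAt_f10 hx hy, ?_⟩
  rintro q ⟨z, hz, -, hlim⟩
  have hq : q ∈ cornerArcs := isClosed_cornerArcs.mem_of_tendsto hlim
    (Eventually.of_forall fun n => grad10_mem_cornerArcs (hz n).1 (hz n).2)
  exact subset_union_left (cornerArcs_subset hq)
end
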